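/- Lemma 4.1 (mountain-pass geometry, lower bound): let p, q ≥ 2, λ > 0, suppose μ(x) ≥ μ0 > 0 and h1(x), h2(x) ≥ h0 > 0 for all x ∈ V, let e1 ∈ L^{p/(p−1)}(V), e2 ∈ L^{q/(q−1)}(V), and let F : V × ℝ² → ℝ be continuously differentiable in (s,t) with F(x,0,0) = 0 and satisfying (C1): there is l0 > 0 such that |F_s(x,s,t)| ≤ (h0/(q+1))(|s|^{p−1}+|t|^{q(p−1)/p}) and |F_t(x,s,t)| ≤ (h0/(q+1))(|s|^p+|t|^{q−1}) for all x ∈ V and all (s,t) with |(s,t)| < l0. Set Λ0 = min{ (l0/2)·min{(h0μ0)^{1/p}, (h0μ0)^{1/q}}, 1 }. Then for every (u,v) with ‖(u,v)‖_W := ‖u‖_{W_{h1}^{1,p}} + ‖v‖_{W_{h2}^{1,q}} ≤ Λ0, the energy satisfies φ_λ(u,v) ≥ (min{1,q−1}/(2^{max{p,q}−1}(pq+p)))·‖(u,v)‖_W^{max{p,q}} − λ·max{h0^{−1/p}‖e1‖_{L^{p/(p−1)}(V)}, h0^{−1/q}‖e2‖_{L^{q/(q−1)}(V)}}·‖(u,v)‖_W.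 -/

import Mathlib

open scoped BigOperators
open Filter Topology

/-- A locally finite weighted graph: `ω x y ≠ 0` encodes the edge relation `x ∼ y`,
edge weights are symmetric and nonnegative, `μ` is a positive vertex measure, and every
vertex has finitely many neighbors. -/
structure WGraph (V : Type*) where
  ω : V → V → ℝ
  μ : V → ℝ
  symm : ∀ x y, ω x y = ω y x
  loopless : ∀ x, ω x x = 0
  weight_nonneg : ∀ x y, 0 ≤ ω x y
  mu_pos : ∀ x, 0 < μ x
  locFin : ∀ x, {y | ω x y ≠ 0}.Finite

namespace WGraph

variable {V : Type*}

/-- The gradient form `Γ(u,v)(x)`. -/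
noncomputable def gamma (G : WGraph V) (u v : V → ℝ) (x : V) : ℝ :=
  (1 / (2 * G.μ x)) * ∑' y, G.ω x y * (u y - u x) * (v y - v x)

/-- The length of the gradient `|∇u|(x)`. -/
noncomputable def grad (G : WGraph V) (u : V → ℝ) (x : V) : ℝ :=
  Real.sqrt (G.gamma u u x)

/-- The graph `p`-Laplacian `Δ_p u (x)`. -/
noncomputable def lapP (G : WGraph V) (p : ℝ) (u : V → ℝ) (x : V) : ℝ :=
  (1 / (2 * G.μ x)) *
    ∑' y, (G.grad u y ^ (p - 2) + G.grad u x ^ (p - 2)) * (G.ω x y * (u y - u x))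

/-- The degree `deg(x) = ∑_{y ∼ x} ω_{xy}`. -/
noncomputable def deg (G : WGraph V) (x : V) : ℝ := ∑' y, G.ω x y

/-- The underlying simple graph: `x ∼ y` iff `ω x y ≠ 0`. -/
def toSimpleGraph (G : WGraph V) : SimpleGraph V where
  Adj x y := G.ω x y ≠ 0
  symm := by
    constructor
    intro x y hxy
    try dsimp only at hxy ⊢
    rw [G.symm]
    exact hxy
  loopless := by
    constructor
    intro x hx
    exact hx (G.loopless x)

/-- The graph distance `dist(x,y)`: the minimal number of edges joining `x` and `y`. -/
noncomputable def dist (G : WGraph V) (x y : V) : ℕ := (G.toSimpleGraph).dist x y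

/-- `∑_{x∈V} μ(x)(|∇u|^s(x) + h(x)|u(x)|^s)`, the `s`-th power of the `W_h^{1,s}(V)` norm. -/
noncomputable def sobSum (G : WGraph V) (h : V → ℝ) (s : ℝ) (u : V → ℝ) : ℝ :=
  ∑' x, G.μ x * (G.grad u x ^ s + h x * |u x| ^ s)

/-- Finiteness of the Sobolev sum, i.e. membership in `W_h^{1,s}(V)`. -/
def SobSummable (G : WGraph V) (h : V → ℝ) (s : ℝ) (u : V → ℝ) : Prop :=
  Summable fun x => G.μ x * (G.grad u x ^ s + h x * |u x| ^ s)

/-- The `W_h^{1,s}(V)` norm. -/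
noncomputable def sobNorm (G : WGraph V) (h : V → ℝ) (s : ℝ) (u : V → ℝ) : ℝ :=
  (G.sobSum h s u) ^ (1 / s)

/-- Membership in `L^r(V)`. -/
def MemLpV (G : WGraph V) (r : ℝ) (g : V → ℝ) : Prop :=
  Summable fun x => G.μ x * |g x| ^ r

/-- The `L^r(V)` norm. -/
noncomputable def lpNorm (G : WGraph V) (r : ℝ) (g : V → ℝ) : ℝ :=
  (∑' x, G.μ x * |g x| ^ r) ^ (1 / r)

/-- The energy functional `φ_λ(u,v)` associated with the `(p,q)`-Laplacian system. -/
noncomputable def energy (G : WGraph V) (p q lam : ℝ) (h1 h2 e1 e2 : V → ℝ)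
    (F : V → ℝ → ℝ → ℝ) (u v : V → ℝ) : ℝ :=
  (1 / p) * G.sobSum h1 p u + (1 / q) * G.sobSum h2 q v
    - ∑' x, G.μ x * F x (u x) (v x)
    - lam * ∑' x, G.μ x * (e1 x * u x + e2 x * v x)

/-- The energy functional `φ_ε(u)` associated with the scalar `p`-Laplacian equation. -/
noncomputable def energyScalar (G : WGraph V) (p eps : ℝ) (h e : V → ℝ)
    (F : V → ℝ → ℝ) (u : V → ℝ) : ℝ :=
  (1 / p) * G.sobSum h p u - ∑' x, G.μ x * F x (u x) - eps * ∑' x, G.μ x * (e x * u x)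

end WGraph

/-- `F(x,s,t)` is continuously differentiable in `(s,t)`, with partial derivatives
`Fs` and `Ft`. -/
def IsC1Pair {V : Type*} (F Fs Ft : V → ℝ → ℝ → ℝ) : Prop :=
  ∀ x : V,
    (∀ s t : ℝ, HasDerivAt (fun z => F x z t) (Fs x s t) s) ∧
    (∀ s t : ℝ, HasDerivAt (fun z => F x s z) (Ft x s t) t) ∧
    Continuous (fun st : ℝ × ℝ => Fs x st.1 st.2) ∧
    Continuous (fun st : ℝ × ℝ => Ft x st.1 st.2)

/-- `F(x,s)` is continuously differentiable in `s`, with derivative `Fs`. -/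
def IsC1Scalar {V : Type*} (F Fs : V → ℝ → ℝ) : Prop :=
  ∀ x : V, (∀ s : ℝ, HasDerivAt (F x) (Fs x s) s) ∧ Continuous (Fs x)

/-!
On the ball every value `|u x|`, `|v x|` is at most `‖(u,v)‖_W / (h0 μ0)^{1/p}` (resp. `1/q`), so
`(u x, v x)` stays in the disc of radius `l0` on which (C1) holds. Integrating (C1) first in `s`
and then in `t`, and splitting the mixed term `|s| |t|^{q(p-1)/p}` with Young's inequality, gives
`|F(x,s,t)| ≤ h0/(q+1) (2/p |s|^p + ((p-1)/p + 1/q) |t|^q)`. Since `h0 ≤ h1, h2`, this is absorbed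
by `‖u‖^p / p + ‖v‖^q / q`, which leaves at least `(‖u‖^p + ‖v‖^q)/(pq+p)`; as both norms are at
most `1`, this dominates `‖(u,v)‖_W^{max p q} / (2^{max p q - 1} (pq+p))`. The linear term is
bounded by Hölder's inequality.
-/

open Real

theorem Real.add_rpow_le_two_rpow_mul {a b M : ℝ} (ha : 0 ≤ a) (hb : 0 ≤ b) (hM : 1 ≤ M) :
    (a + b) ^ M ≤ 2 ^ (M - 1) * (a ^ M + b ^ M) := by
  lift a to NNReal using ha
  lift b to NNReal using hb
  exact_mod_cast NNReal.rpow_add_le_mul_rpow_add_rpow a b hM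

theorem Real.add_rpow_max_le {a b p q : ℝ} (ha : 0 ≤ a) (hb : 0 ≤ b) (hab : a + b ≤ 1)
    (hp : 1 ≤ p) (hq : 0 ≤ q) :
    (a + b) ^ max p q ≤ 2 ^ (max p q - 1) * (a ^ p + b ^ q) := by
  have ha1 : a ≤ 1 := by linarith
  have hb1 : b ≤ 1 := by linarith
  calc (a + b) ^ max p q ≤ 2 ^ (max p q - 1) * (a ^ max p q + b ^ max p q) :=
        add_rpow_le_two_rpow_mul ha hb (hp.trans (le_max_left p q))
    _ ≤ 2 ^ (max p q - 1) * (a ^ p + b ^ q) := by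
        gcongr ?_ * (?_ + ?_)
        · exact rpow_le_rpow_of_exponent_ge' ha ha1 (by linarith) (le_max_left p q)
        · exact rpow_le_rpow_of_exponent_ge' hb hb1 hq (le_max_right p q)

theorem Real.min_div_mul_add_rpow_max_le {p q A B : ℝ} (hp : 1 ≤ p) (hq : 2 ≤ q) (hA : 0 ≤ A)
    (hB : 0 ≤ B) (hAB : A + B ≤ 1) :
    min 1 (q - 1) / (2 ^ (max p q - 1) * (p * q + p)) * (A + B) ^ max p q ≤
      1 / p * A ^ p + 1 / q * B ^ q -
        (2 / (p * (q + 1)) * A ^ p + ((p - 1) / p + 1 / q) / (q + 1) * B ^ q) := by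
  have hp0 : 0 < p := by linarith
  have hq0 : 0 < q := by linarith
  have hrhs : 1 / p * A ^ p + 1 / q * B ^ q -
      (2 / (p * (q + 1)) * A ^ p + ((p - 1) / p + 1 / q) / (q + 1) * B ^ q) =
        (A ^ p + B ^ q) / (p * q + p) + (q - 2) / (p * q + p) * A ^ p := by
    field_simp
    ring
  rw [min_eq_left (by linarith), hrhs]
  calc 1 / (2 ^ (max p q - 1) * (p * q + p)) * (A + B) ^ max p q
      ≤ 1 / (2 ^ (max p q - 1) * (p * q + p)) * (2 ^ (max p q - 1) * (A ^ p + B ^ q)) := by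
        gcongr
        exact add_rpow_max_le hA hB hAB hp hq0.le
    _ = (A ^ p + B ^ q) / (p * q + p) := by field_simp
    _ ≤ _ := le_add_of_nonneg_right
        (mul_nonneg (div_nonneg (by linarith) (by positivity)) (rpow_nonneg hA p))

theorem abs_sub_le_of_abs_deriv_le_of_nonneg {φ φ' : ℝ → ℝ} {p c K s : ℝ} (hp : 1 ≤ p)
    (hφ : ∀ r, HasDerivAt φ (φ' r) r) (hs : 0 ≤ s)
    (hbound : ∀ r, 0 ≤ r → r ≤ s → |φ' r| ≤ c * r ^ (p - 1) + K) :
    |φ s - φ 0| ≤ c * s ^ p / p + K * s := by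
  have hB : ∀ r, HasDerivAt (fun r => c * r ^ p / p + K * r) (c * r ^ (p - 1) + K) r := by
    intro r
    have hpow : HasDerivAt (fun r : ℝ => r ^ p) (p * r ^ (p - 1)) r :=
      hasDerivAt_rpow_const (Or.inr hp)
    refine ((hpow.const_mul c).div_const p).add ((hasDerivAt_id r).const_mul K) |>.congr_deriv ?_
    field_simp [(zero_lt_one.trans_le hp).ne']
  refine image_norm_le_of_norm_deriv_right_le_deriv_boundary (f := fun r => φ r - φ 0)
    (fun r _ => ((hφ r).sub_const (φ 0)).continuousAt.continuousWithinAt)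
    (fun r _ => ((hφ r).sub_const (φ 0)).hasDerivWithinAt) ?_ hB
    (fun r hr => hbound r hr.1 hr.2.le) (Set.right_mem_Icc.2 hs)
  simp [zero_rpow (zero_lt_one.trans_le hp).ne']

theorem abs_sub_le_of_abs_deriv_le {φ φ' : ℝ → ℝ} {p c K s : ℝ} (hp : 1 ≤ p)
    (hφ : ∀ r, HasDerivAt φ (φ' r) r)
    (hbound : ∀ r, |r| ≤ |s| → |φ' r| ≤ c * |r| ^ (p - 1) + K) :
    |φ s - φ 0| ≤ c * |s| ^ p / p + K * |s| := by
  rcases le_or_gt 0 s with hs | hs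
  · rw [abs_of_nonneg hs]
    refine abs_sub_le_of_abs_deriv_le_of_nonneg hp hφ hs fun r hr hrs => ?_
    simpa [abs_of_nonneg hr, abs_of_nonneg hs, hrs] using hbound r
  · have hφneg : ∀ r, HasDerivAt (fun z => φ (-z)) (-φ' (-r)) r := fun r =>
      ((hφ (-r)).comp r (hasDerivAt_neg r)).congr_deriv (mul_neg_one _)
    rw [abs_of_neg hs]
    simpa using abs_sub_le_of_abs_deriv_le_of_nonneg hp hφneg (neg_nonneg.2 hs.le)
      fun r hr hrs => by
        simpa [abs_of_nonneg hr, abs_of_neg hs, hrs] using hbound (-r)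

theorem young_inequality_abs_rpow {a b p q : ℝ} (hp : 1 < p) :
    |a| * |b| ^ (q * (p - 1) / p) ≤ |a| ^ p / p + (p - 1) / p * |b| ^ q := by
  have hp0 : p ≠ 0 := by positivity
  have hp1 : p - 1 ≠ 0 := sub_ne_zero.2 hp.ne'
  have hexp : q * (p - 1) / p * (p / (p - 1)) = q := by field_simp
  have h := young_inequality_of_nonneg (abs_nonneg a)
    (rpow_nonneg (abs_nonneg b) (q * (p - 1) / p)) (HolderConjugate.conjExponent hp)
  rw [conjExponent, ← rpow_mul (abs_nonneg b), hexp] at h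
  convert h using 2
  field_simp

theorem abs_le_of_hasDerivAt_of_growth {F Fs Ft : ℝ → ℝ → ℝ} {c l0 p q s t : ℝ}
    (hp : 1 < p) (hq : 1 ≤ q) (hc : 0 ≤ c)
    (hFs' : ∀ s t, HasDerivAt (fun z => F z t) (Fs s t) s)
    (hFt' : ∀ s t, HasDerivAt (fun z => F s z) (Ft s t) t) (hF00 : F 0 0 = 0)
    (hFs : ∀ s t, √(s ^ 2 + t ^ 2) < l0 →
      |Fs s t| ≤ c * (|s| ^ (p - 1) + |t| ^ (q * (p - 1) / p)))
    (hFt : ∀ s t, √(s ^ 2 + t ^ 2) < l0 → |Ft s t| ≤ c * (|s| ^ p + |t| ^ (q - 1)))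
    (hst : √(s ^ 2 + t ^ 2) < l0) :
    |F s t| ≤ c * (2 / p * |s| ^ p + ((p - 1) / p + 1 / q) * |t| ^ q) := by
  have hmono : ∀ {r r' s' t' : ℝ}, |r| ≤ |s'| → |r'| ≤ |t'| →
      √(r ^ 2 + r' ^ 2) ≤ √(s' ^ 2 + t' ^ 2) := fun hr hr' =>
    sqrt_le_sqrt (add_le_add (sq_le_sq.2 hr) (sq_le_sq.2 hr'))
  have hs_step : |F s t - F 0 t| ≤ c * |s| ^ p / p + c * |t| ^ (q * (p - 1) / p) * |s| :=
    abs_sub_le_of_abs_deriv_le hp.le (fun r => hFs' r t) fun r hr =>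
      (hFs r t ((hmono hr le_rfl).trans_lt hst)).trans_eq (mul_add _ _ _)
  have ht_step : |F 0 t - F 0 0| ≤ c * |t| ^ q / q + 0 * |t| :=
    abs_sub_le_of_abs_deriv_le hq (fun r => hFt' 0 r) fun r hr => by
      simpa [zero_rpow (zero_lt_one.trans hp).ne'] using
        hFt 0 r ((hmono (by simp) hr).trans_lt hst)
  have hyoung :=
    mul_le_mul_of_nonneg_left (young_inequality_abs_rpow (a := s) (b := t) (q := q) hp) hc
  calc |F s t| = |(F s t - F 0 t) + (F 0 t - F 0 0)| := by
        rw [hF00, sub_zero, sub_add_cancel]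
    _ ≤ |F s t - F 0 t| + |F 0 t - F 0 0| := abs_add_le _ _
    _ ≤ (c * |s| ^ p / p + c * |t| ^ (q * (p - 1) / p) * |s|) + (c * |t| ^ q / q + 0 * |t|) :=
        add_le_add hs_step ht_step
    _ ≤ c * (2 / p * |s| ^ p + ((p - 1) / p + 1 / q) * |t| ^ q) := by
        linear_combination hyoung

namespace WGraph

variable {V : Type*} (G : WGraph V) {h : V → ℝ} {h0 s : ℝ} {u : V → ℝ}

noncomputable def sobTerm (h : V → ℝ) (s : ℝ) (u : V → ℝ) (x : V) : ℝ :=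
  G.μ x * (G.grad u x ^ s + h x * |u x| ^ s)

theorem mul_mu_abs_rpow_le_sobTerm (hh : ∀ x, h0 ≤ h x) (x : V) :
    h0 * (G.μ x * |u x| ^ s) ≤ G.sobTerm h s u x := by
  have hμ := (G.mu_pos x).le
  have hu := rpow_nonneg (abs_nonneg (u x)) s
  calc h0 * (G.μ x * |u x| ^ s) ≤ G.μ x * (h x * |u x| ^ s) := by
        nlinarith [mul_le_mul_of_nonneg_right (hh x) (mul_nonneg hμ hu)]
    _ ≤ G.sobTerm h s u x := by
        unfold sobTerm
        gcongr
        exact le_add_of_nonneg_left (rpow_nonneg (sqrt_nonneg _) s)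

theorem sobTerm_nonneg (hh : ∀ x, 0 ≤ h x) (x : V) : 0 ≤ G.sobTerm h s u x := by
  simpa using G.mul_mu_abs_rpow_le_sobTerm (s := s) (u := u) hh x

theorem sobSum_nonneg (hh : ∀ x, 0 ≤ h x) : 0 ≤ G.sobSum h s u :=
  tsum_nonneg (G.sobTerm_nonneg hh)

theorem sobNorm_nonneg (hh : ∀ x, 0 ≤ h x) : 0 ≤ G.sobNorm h s u :=
  rpow_nonneg (G.sobSum_nonneg hh) _

theorem sobNorm_rpow (hh : ∀ x, 0 ≤ h x) (hs : s ≠ 0) : G.sobNorm h s u ^ s = G.sobSum h s u := by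
  rw [sobNorm, one_div, rpow_inv_rpow (G.sobSum_nonneg hh) hs]

theorem summable_mu_abs_rpow (hh0 : 0 < h0) (hh : ∀ x, h0 ≤ h x) (hu : G.SobSummable h s u) :
    Summable fun x => G.μ x * |u x| ^ s :=
  (hu.div_const h0).of_nonneg_of_le
    (fun x => mul_nonneg (G.mu_pos x).le (rpow_nonneg (abs_nonneg _) s))
    fun x => (le_div_iff₀' hh0).2 (G.mul_mu_abs_rpow_le_sobTerm hh x)

theorem mul_tsum_mu_abs_rpow_le (hh0 : 0 < h0) (hh : ∀ x, h0 ≤ h x) (hu : G.SobSummable h s u) :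
    h0 * ∑' x, G.μ x * |u x| ^ s ≤ G.sobSum h s u := by
  rw [← tsum_mul_left]
  exact ((G.summable_mu_abs_rpow hh0 hh hu).mul_left h0).tsum_le_tsum
    (G.mul_mu_abs_rpow_le_sobTerm hh) hu

theorem abs_le_sobNorm_div {μ0 : ℝ} (hμ0 : 0 < μ0) (hh0 : 0 < h0) (hμ : ∀ x, μ0 ≤ G.μ x)
    (hh : ∀ x, h0 ≤ h x) (hs : 0 < s) (hu : G.SobSummable h s u) (x : V) :
    |u x| ≤ G.sobNorm h s u / (h0 * μ0) ^ (1 / s) := by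
  have hh' : ∀ x, 0 ≤ h x := fun x => hh0.le.trans (hh x)
  have hterm : |u x| ^ s * (h0 * μ0) ≤ G.sobSum h s u :=
    calc |u x| ^ s * (h0 * μ0) ≤ h0 * (G.μ x * |u x| ^ s) := by
          nlinarith [mul_le_mul_of_nonneg_left (hμ x)
            (mul_nonneg hh0.le (rpow_nonneg (abs_nonneg (u x)) s))]
      _ ≤ G.sobTerm h s u x := G.mul_mu_abs_rpow_le_sobTerm hh x
      _ ≤ G.sobSum h s u := hu.le_tsum x fun y _ => G.sobTerm_nonneg hh' y
  rw [le_div_iff₀ (by positivity), sobNorm, one_div]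
  calc |u x| * (h0 * μ0) ^ s⁻¹ = (|u x| ^ s * (h0 * μ0)) ^ s⁻¹ := by
        rw [mul_rpow (x := |u x| ^ s) (by positivity) (by positivity),
          rpow_rpow_inv (abs_nonneg _) hs.ne']
    _ ≤ G.sobSum h s u ^ s⁻¹ := rpow_le_rpow (by positivity) hterm (by positivity)

theorem summable_and_tsum_mu_mul_le {r r' : ℝ} {e w : V → ℝ} (hrr' : r.HolderConjugate r')
    (he : G.MemLpV r' e) (hw : Summable fun x => G.μ x * |w x| ^ r) :
    (Summable fun x => G.μ x * (|e x| * |w x|)) ∧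
      ∑' x, G.μ x * (|e x| * |w x|) ≤ G.lpNorm r' e * (∑' x, G.μ x * |w x| ^ r) ^ (1 / r) := by
  have hweight : ∀ {t : ℝ}, t ≠ 0 → ∀ (g : V → ℝ) x,
      (G.μ x ^ (1 / t) * |g x|) ^ t = G.μ x * |g x| ^ t := fun ht g x => by
    rw [mul_rpow (rpow_nonneg (G.mu_pos x).le _) (abs_nonneg _), ← rpow_mul (G.mu_pos x).le,
      one_div_mul_cancel ht, rpow_one]
  have hsplit : ∀ x, (G.μ x ^ (1 / r') * |e x|) * (G.μ x ^ (1 / r) * |w x|) =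
      G.μ x * (|e x| * |w x|) := fun x => by
    rw [mul_mul_mul_comm, ← rpow_add (G.mu_pos x), one_div, one_div, add_comm,
      hrr'.inv_add_inv_eq_one, rpow_one]
  obtain ⟨hsum, hle⟩ := summable_and_inner_le_Lp_mul_Lq_tsum_of_nonneg hrr'.symm
    (f := fun x => G.μ x ^ (1 / r') * |e x|) (g := fun x => G.μ x ^ (1 / r) * |w x|)
    (fun x => mul_nonneg (rpow_nonneg (G.mu_pos x).le _) (abs_nonneg (e x)))
    (fun x => mul_nonneg (rpow_nonneg (G.mu_pos x).le _) (abs_nonneg (w x)))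
    (by simp only [hweight hrr'.symm.ne_zero e]; exact he)
    (by simp only [hweight hrr'.ne_zero w]; exact hw)
  simp only [hsplit, hweight hrr'.symm.ne_zero e, hweight hrr'.ne_zero w] at hsum hle
  exact ⟨hsum, hle⟩

theorem summable_and_tsum_mu_mul_le_sobNorm {r r' : ℝ} {e : V → ℝ} (hrr' : r.HolderConjugate r')
    (hh0 : 0 < h0) (hh : ∀ x, h0 ≤ h x) (he : G.MemLpV r' e) (hu : G.SobSummable h r u) :
    (Summable fun x => G.μ x * (|e x| * |u x|)) ∧
      ∑' x, G.μ x * (|e x| * |u x|) ≤ h0 ^ (-(1 / r)) * G.lpNorm r' e * G.sobNorm h r u := by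
  obtain ⟨hsum, hle⟩ := G.summable_and_tsum_mu_mul_le hrr' he (G.summable_mu_abs_rpow hh0 hh hu)
  have hL : 0 ≤ G.lpNorm r' e := rpow_nonneg
    (tsum_nonneg fun x => mul_nonneg (G.mu_pos x).le (rpow_nonneg (abs_nonneg _) _)) _
  have hLr : (∑' x, G.μ x * |u x| ^ r) ^ (1 / r) ≤ h0 ^ (-(1 / r)) * G.sobNorm h r u := by
    rw [sobNorm, rpow_neg hh0.le, ← inv_rpow hh0.le,
      ← mul_rpow (inv_nonneg.2 hh0.le) (G.sobSum_nonneg fun x => hh0.le.trans (hh x))]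
    refine rpow_le_rpow (tsum_nonneg fun x => mul_nonneg (G.mu_pos x).le
      (rpow_nonneg (abs_nonneg _) _)) ?_ (one_div_nonneg.2 hrr'.nonneg)
    rw [le_inv_mul_iff₀ hh0]
    exact G.mul_tsum_mu_abs_rpow_le hh0 hh hu
  refine ⟨hsum, hle.trans ?_⟩
  calc G.lpNorm r' e * (∑' x, G.μ x * |u x| ^ r) ^ (1 / r)
      ≤ G.lpNorm r' e * (h0 ^ (-(1 / r)) * G.sobNorm h r u) := mul_le_mul_of_nonneg_left hLr hL
    _ = h0 ^ (-(1 / r)) * G.lpNorm r' e * G.sobNorm h r u := by ring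

theorem summable_and_tsum_mu_add_mul_le {p p' q q' : ℝ} {h1 h2 e1 e2 v : V → ℝ}
    (hp : p.HolderConjugate p') (hq : q.HolderConjugate q') (hh0 : 0 < h0)
    (hh1 : ∀ x, h0 ≤ h1 x) (hh2 : ∀ x, h0 ≤ h2 x) (he1 : G.MemLpV p' e1) (he2 : G.MemLpV q' e2)
    (hu : G.SobSummable h1 p u) (hv : G.SobSummable h2 q v) :
    (Summable fun x => G.μ x * (e1 x * u x + e2 x * v x)) ∧
      ∑' x, G.μ x * (e1 x * u x + e2 x * v x) ≤
        max (h0 ^ (-(1 / p)) * G.lpNorm p' e1) (h0 ^ (-(1 / q)) * G.lpNorm q' e2) *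
          (G.sobNorm h1 p u + G.sobNorm h2 q v) := by
  obtain ⟨hsum1, hle1⟩ := G.summable_and_tsum_mu_mul_le_sobNorm hp hh0 hh1 he1 hu
  obtain ⟨hsum2, hle2⟩ := G.summable_and_tsum_mu_mul_le_sobNorm hq hh0 hh2 he2 hv
  set C1 := h0 ^ (-(1 / p)) * G.lpNorm p' e1
  set C2 := h0 ^ (-(1 / q)) * G.lpNorm q' e2
  have hbound : ∀ x, ‖G.μ x * (e1 x * u x + e2 x * v x)‖ ≤
      G.μ x * (|e1 x| * |u x|) + G.μ x * (|e2 x| * |v x|) := fun x => by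
    rw [Real.norm_eq_abs, abs_mul, abs_of_pos (G.mu_pos x), ← mul_add, ← abs_mul, ← abs_mul]
    exact mul_le_mul_of_nonneg_left (abs_add_le _ _) (G.mu_pos x).le
  have hsum := Summable.of_norm_bounded (hsum1.add hsum2) hbound
  refine ⟨hsum, ?_⟩
  calc ∑' x, G.μ x * (e1 x * u x + e2 x * v x)
      ≤ ∑' x, (G.μ x * (|e1 x| * |u x|) + G.μ x * (|e2 x| * |v x|)) :=
        hsum.tsum_le_tsum (fun x => (le_abs_self _).trans (hbound x)) (hsum1.add hsum2)
    _ = ∑' x, G.μ x * (|e1 x| * |u x|) + ∑' x, G.μ x * (|e2 x| * |v x|) :=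
        hsum1.tsum_add hsum2
    _ ≤ max C1 C2 * G.sobNorm h1 p u + max C1 C2 * G.sobNorm h2 q v :=
        add_le_add
          (hle1.trans (mul_le_mul_of_nonneg_right (le_max_left C1 C2)
            (G.sobNorm_nonneg fun x => hh0.le.trans (hh1 x))))
          (hle2.trans (mul_le_mul_of_nonneg_right (le_max_right C1 C2)
            (G.sobNorm_nonneg fun x => hh0.le.trans (hh2 x))))
    _ = max C1 C2 * (G.sobNorm h1 p u + G.sobNorm h2 q v) := (mul_add _ _ _).symm

theorem summable_and_tsum_mu_le_of_abs_le {p q a b : ℝ} {h1 h2 f v : V → ℝ} (ha : 0 ≤ a)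
    (hb : 0 ≤ b) (hh1 : ∀ x, h0 ≤ h1 x) (hh2 : ∀ x, h0 ≤ h2 x) (hu : G.SobSummable h1 p u)
    (hv : G.SobSummable h2 q v) (hf : ∀ x, |f x| ≤ h0 * (a * |u x| ^ p + b * |v x| ^ q)) :
    (Summable fun x => G.μ x * f x) ∧
      ∑' x, G.μ x * f x ≤ a * G.sobSum h1 p u + b * G.sobSum h2 q v := by
  have hbound : ∀ x, ‖G.μ x * f x‖ ≤ a * G.sobTerm h1 p u x + b * G.sobTerm h2 q v x :=
    fun x => by
      have hu' := mul_le_mul_of_nonneg_left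
        (G.mul_mu_abs_rpow_le_sobTerm hh1 (s := p) (u := u) x) ha
      have hv' := mul_le_mul_of_nonneg_left
        (G.mul_mu_abs_rpow_le_sobTerm hh2 (s := q) (u := v) x) hb
      rw [Real.norm_eq_abs, abs_mul, abs_of_pos (G.mu_pos x)]
      nlinarith [mul_le_mul_of_nonneg_left (hf x) (G.mu_pos x).le]
  have hu' : Summable fun x => a * G.sobTerm h1 p u x := hu.mul_left a
  have hv' : Summable fun x => b * G.sobTerm h2 q v x := hv.mul_left b
  have hdom := hu'.add hv'
  have hsum := Summable.of_norm_bounded hdom hbound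
  refine ⟨hsum, ?_⟩
  calc ∑' x, G.μ x * f x ≤ ∑' x, (a * G.sobTerm h1 p u x + b * G.sobTerm h2 q v x) :=
        hsum.tsum_le_tsum (fun x => (le_abs_self _).trans (hbound x)) hdom
    _ = a * G.sobSum h1 p u + b * G.sobSum h2 q v := by
        rw [hu'.tsum_add hv', tsum_mul_left, tsum_mul_left]
        rfl

theorem sqrt_sq_add_sq_le_div_min {μ0 p q : ℝ} {h1 h2 v : V → ℝ} (hμ0 : 0 < μ0) (hh0 : 0 < h0)
    (hμ : ∀ x, μ0 ≤ G.μ x) (hh1 : ∀ x, h0 ≤ h1 x) (hh2 : ∀ x, h0 ≤ h2 x) (hp : 0 < p)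
    (hq : 0 < q) (hu : G.SobSummable h1 p u) (hv : G.SobSummable h2 q v) (x : V) :
    √(u x ^ 2 + v x ^ 2) ≤ (G.sobNorm h1 p u + G.sobNorm h2 q v) /
      min ((h0 * μ0) ^ (1 / p)) ((h0 * μ0) ^ (1 / q)) := by
  have hm : 0 < min ((h0 * μ0) ^ (1 / p)) ((h0 * μ0) ^ (1 / q)) :=
    lt_min (by positivity) (by positivity)
  have hA := G.sobNorm_nonneg (s := p) (u := u) fun x => hh0.le.trans (hh1 x)
  have hB := G.sobNorm_nonneg (s := q) (u := v) fun x => hh0.le.trans (hh2 x)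
  calc √(u x ^ 2 + v x ^ 2) ≤ |u x| + |v x| := sqrt_le_iff.2 ⟨by positivity, by
        nlinarith [sq_abs (u x), sq_abs (v x), abs_nonneg (u x), abs_nonneg (v x)]⟩
    _ ≤ G.sobNorm h1 p u / (h0 * μ0) ^ (1 / p) + G.sobNorm h2 q v / (h0 * μ0) ^ (1 / q) :=
        add_le_add (G.abs_le_sobNorm_div hμ0 hh0 hμ hh1 hp hu x)
          (G.abs_le_sobNorm_div hμ0 hh0 hμ hh2 hq hv x)
    _ ≤ G.sobNorm h1 p u / min ((h0 * μ0) ^ (1 / p)) ((h0 * μ0) ^ (1 / q)) +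
          G.sobNorm h2 q v / min ((h0 * μ0) ^ (1 / p)) ((h0 * μ0) ^ (1 / q)) :=
        add_le_add (div_le_div_of_nonneg_left hA hm (min_le_left _ _))
          (div_le_div_of_nonneg_left hB hm (min_le_right _ _))
    _ = _ := (add_div _ _ _).symm

end WGraph

/-- Lemma 4.1: under (H1) and (C1), for every `(u,v)` in the ball
`‖(u,v)‖_W ≤ Λ0` the energy functional `φ_λ` is well defined and satisfies
`φ_λ(u,v) ≥ (min{1,q−1}/(2^{max{p,q}−1}(pq+p)))‖(u,v)‖_W^{max{p,q}}
  − λ·max{h0^{−1/p}‖e1‖, h0^{−1/q}‖e2‖}·‖(u,v)‖_W`. -/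
theorem lemma_4_1 {V : Type*} (G : WGraph V)
    (μ0 h0 : ℝ) (hμ0 : 0 < μ0) (hh0 : 0 < h0) (hμ : ∀ x, μ0 ≤ G.μ x)
    (p q lam : ℝ) (hp : 2 ≤ p) (hq : 2 ≤ q) (hlam : 0 < lam)
    (h1 h2 : V → ℝ) (hh1 : ∀ x, h0 ≤ h1 x) (hh2 : ∀ x, h0 ≤ h2 x)
    (e1 e2 : V → ℝ) (he1L : G.MemLpV (p / (p - 1)) e1) (he2L : G.MemLpV (q / (q - 1)) e2)
    (F Fs Ft : V → ℝ → ℝ → ℝ) (hC1 : IsC1Pair F Fs Ft) (hF00 : ∀ x, F x 0 0 = 0)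
    (l0 : ℝ) (hl0 : 0 < l0)
    (hFs : ∀ x s t, Real.sqrt (s ^ 2 + t ^ 2) < l0 →
      |Fs x s t| ≤ (h0 / (q + 1)) * (|s| ^ (p - 1) + |t| ^ (q * (p - 1) / p)))
    (hFt : ∀ x s t, Real.sqrt (s ^ 2 + t ^ 2) < l0 →
      |Ft x s t| ≤ (h0 / (q + 1)) * (|s| ^ p + |t| ^ (q - 1)))
    (u v : V → ℝ) (hu : G.SobSummable h1 p u) (hv : G.SobSummable h2 q v)
    (hball : G.sobNorm h1 p u + G.sobNorm h2 q v ≤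
      min (l0 / 2 * min ((h0 * μ0) ^ (1 / p)) ((h0 * μ0) ^ (1 / q))) 1) :
    (Summable fun x => G.μ x * F x (u x) (v x)) ∧
    (Summable fun x => G.μ x * (e1 x * u x + e2 x * v x)) ∧
    G.energy p q lam h1 h2 e1 e2 F u v ≥
      (min 1 (q - 1) / (2 ^ (max p q - 1) * (p * q + p))) *
          (G.sobNorm h1 p u + G.sobNorm h2 q v) ^ (max p q)
        - lam * max (h0 ^ (-(1 / p)) * G.lpNorm (p / (p - 1)) e1)
            (h0 ^ (-(1 / q)) * G.lpNorm (q / (q - 1)) e2)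
          * (G.sobNorm h1 p u + G.sobNorm h2 q v) := by
  have hp1 : 1 < p := by linarith
  have hq1 : 1 < q := by linarith
  have hh1' : ∀ x, 0 ≤ h1 x := fun x => hh0.le.trans (hh1 x)
  have hh2' : ∀ x, 0 ≤ h2 x := fun x => hh0.le.trans (hh2 x)
  obtain ⟨hball_l0, hball_one⟩ := le_min_iff.1 hball
  have hsmall : ∀ x, √(u x ^ 2 + v x ^ 2) < l0 := fun x =>
    calc √(u x ^ 2 + v x ^ 2) ≤ _ :=
          G.sqrt_sq_add_sq_le_div_min hμ0 hh0 hμ hh1 hh2 (by positivity) (by positivity) hu hv x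
      _ ≤ l0 / 2 := div_le_of_le_mul₀ (by positivity) (by positivity) (by linarith)
      _ < l0 := half_lt_self hl0
  have hFx : ∀ x, |F x (u x) (v x)| ≤
      h0 * (2 / (p * (q + 1)) * |u x| ^ p + ((p - 1) / p + 1 / q) / (q + 1) * |v x| ^ q) :=
    fun x => (abs_le_of_hasDerivAt_of_growth hp1 hq1.le (by positivity) (hC1 x).1 (hC1 x).2.1
      (hF00 x) (hFs x) (hFt x) (hsmall x)).trans_eq (by field_simp)
  obtain ⟨hFsum, hFle⟩ :=
    G.summable_and_tsum_mu_le_of_abs_le (by positivity) (by positivity) hh1 hh2 hu hv hFx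
  obtain ⟨hEsum, hEle⟩ := G.summable_and_tsum_mu_add_mul_le (p' := p / (p - 1))
    (q' := q / (q - 1)) (.conjExponent hp1) (.conjExponent hq1) hh0 hh1 hh2 he1L he2L hu hv
  refine ⟨hFsum, hEsum, ?_⟩
  have hcoer := min_div_mul_add_rpow_max_le hp1.le hq (G.sobNorm_nonneg hh1')
    (G.sobNorm_nonneg hh2') hball_one
  rw [G.sobNorm_rpow hh1' (by positivity), G.sobNorm_rpow hh2' (by positivity)] at hcoer
  have hElam := mul_le_mul_of_nonneg_left hEle hlam.le
  rw [ge_iff_le, WGraph.energy]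
  linarith
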